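/- (Hibi) A full-dimensional rational convex polytope P ⊆ R^d is dual-integral if and only if #(nP ∩ Z^d) = #(int((n+1)P) ∩ Z^d) for all natural numbers n. -/

import Mathlib

/-!
For a lattice point `p ∈ int P` let `g` be the gauge of `Q = P - p`. Then `nQ = {g ≤ n}` and
`int((n+1)Q) = {g < n+1}`, so the counting identity for every `n` says exactly that `g` takes
natural values on `ℤ^d`. The identity is invariant under lattice translations; for `n = 0` it
produces such a `p`, and conversely `p ∈ int P` as soon as `(P - p)*` is bounded. By the
bipolar theorem `g` is the support function `x ↦ max_{y ∈ Q*} ⟨x, y⟩` of the dual.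

If `Q*` is a lattice polytope this maximum is attained at a lattice point, hence integral.
Conversely, at a vertex `v` of `Q* = {y | ⟨y, s⟩ ≤ 1, s ∈ S - p}` the tight constraints span
`ℝ^d`, and on the cone they generate the support function is `⟨·, v⟩`. Since `S` is rational this
cone contains lattice points `z` and `z + e_j`, so `v_j = g(z + e_j) - g(z) ∈ ℤ`; Krein–Milman
then gives `Q* = conv(Q* ∩ ℤ^d)`.
-/

open Pointwise

/-- The polar dual of a set `S ⊆ ℝ^d` : `S* = {x | ⟨x, s⟩ ≤ 1 for all s ∈ S}`. -/
def polarDual {d : ℕ} (S : Set (Fin d → ℝ)) : Set (Fin d → ℝ) :=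
  {x | ∀ s ∈ S, ∑ i, x i * s i ≤ 1}

/-- The canonical embedding `ℤ^d → ℝ^d`. -/
def latCast {d : ℕ} (v : Fin d → ℤ) : Fin d → ℝ := fun i => (v i : ℝ)

open Set Matrix Bornology Topology Filter

variable {d : ℕ}

section Lattice

@[simp] lemma latCast_apply (v : Fin d → ℤ) (i : Fin d) : latCast v i = v i := rfl

@[simp] lemma latCast_add (v w : Fin d → ℤ) : latCast (v + w) = latCast v + latCast w := by
  ext; simp

@[simp] lemma latCast_nsmul (n : ℕ) (v : Fin d → ℤ) : latCast (n • v) = n • latCast v := by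
  ext; simp

@[simp] lemma latCast_single (j : Fin d) : latCast (Pi.single j 1) = Pi.single j (1 : ℝ) := by
  ext i
  by_cases h : i = j <;> simp [h]

lemma latCast_dotProduct (x y : Fin d → ℤ) : latCast x ⬝ᵥ latCast y = ((x ⬝ᵥ y : ℤ) : ℝ) := by
  simp [dotProduct]

lemma isometry_latCast : Isometry (latCast (d := d)) :=
  Isometry.of_dist_eq fun _ _ => rfl

lemma finite_preimage_latCast {B : Set (Fin d → ℝ)} (hB : IsBounded B) :
    (latCast ⁻¹' B).Finite :=
  (Metric.isCompact_of_isClosed_isBounded (isClosed_discrete _)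
    (isometry_latCast.antilipschitz.isBounded_preimage hB)).finite_of_discrete

lemma exists_pos_latCast_eq_nsmul {x : Fin d → ℝ} (hx : ∀ i, ∃ q : ℚ, x i = q) :
    ∃ N : ℕ, 0 < N ∧ ∃ u : Fin d → ℤ, latCast u = N • x := by
  choose q hq using hx
  choose k hk using fun i => Finset.dvd_prod_of_mem (fun j => (q j).den) (Finset.mem_univ i)
  refine ⟨∏ i, (q i).den, Finset.prod_pos fun i _ => (q i).den_pos,
    fun i => (q i).num * k i, funext fun i => ?_⟩
  have hnum := congrArg (Rat.cast : ℚ → ℝ) (q i).mul_den_eq_num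
  push_cast at hnum
  rw [latCast_apply, Pi.smul_apply, hk i, hq i, nsmul_eq_mul]
  push_cast
  rw [← hnum]
  ring

lemma preimage_latCast_image_sub (v : Fin d → ℤ) (A : Set (Fin d → ℝ)) :
    latCast ⁻¹' ((· - latCast v) '' A) = (· - v) '' (latCast ⁻¹' A) := by
  ext x
  constructor
  · rintro ⟨y, hy, hxy⟩
    exact ⟨x + v, by simpa [← hxy] using hy, add_sub_cancel_right x v⟩
  · rintro ⟨y, hy, rfl⟩
    exact ⟨latCast y, hy, by ext; simp⟩

lemma ncard_preimage_latCast_image_sub (v : Fin d → ℤ) (A : Set (Fin d → ℝ)) :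
    (latCast ⁻¹' ((· - latCast v) '' A)).ncard = (latCast ⁻¹' A).ncard := by
  rw [preimage_latCast_image_sub, ncard_image_of_injective _ sub_left_injective]

lemma smul_image_sub (c : ℝ) (a : Fin d → ℝ) (A : Set (Fin d → ℝ)) :
    c • ((· - a) '' A) = (· - c • a) '' (c • A) := by
  simp only [← image_smul, image_image, smul_sub]

lemma interior_image_sub (a : Fin d → ℝ) (A : Set (Fin d → ℝ)) :
    interior ((· - a) '' A) = (· - a) '' interior A :=
  ((Homeomorph.subRight a).image_interior A).symm

lemma image_sub_convexHull (a : Fin d → ℝ) (A : Set (Fin d → ℝ)) :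
    (· - a) '' convexHull ℝ A = convexHull ℝ ((· - a) '' A) := by
  have : (· - a) = ⇑(AffineEquiv.constVAdd ℝ (Fin d → ℝ) (-a)) :=
    funext fun x => sub_eq_neg_add x a
  rw [this]
  exact (AffineEquiv.constVAdd ℝ _ (-a)).toAffineMap.image_convexHull A

lemma forall_ncard_smul_eq_ncard_interior_image_sub_iff (p : Fin d → ℤ)
    (A : Set (Fin d → ℝ)) :
    (∀ n : ℕ, (latCast ⁻¹' ((n : ℝ) • ((· - latCast p) '' A))).ncard =
        (latCast ⁻¹' interior (((n : ℝ) + 1) • ((· - latCast p) '' A))).ncard) ↔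
      ∀ n : ℕ, (latCast ⁻¹' ((n : ℝ) • A)).ncard =
        (latCast ⁻¹' interior (((n : ℝ) + 1) • A)).ncard := by
  have hsmul (k : ℕ) :
      (k : ℝ) • ((· - latCast p) '' A) = (· - latCast (k • p)) '' ((k : ℝ) • A) := by
    rw [smul_image_sub, latCast_nsmul, Nat.cast_smul_eq_nsmul]
  have hsmul' (n : ℕ) : ((n : ℝ) + 1) • ((· - latCast p) '' A) =
      (· - latCast ((n + 1) • p)) '' (((n : ℝ) + 1) • A) := by
    simpa using hsmul (n + 1)
  simp_rw [hsmul, hsmul', interior_image_sub, ncard_preimage_latCast_image_sub]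

lemma exists_latCast_mem_interior_of_ncard_eq {A : Set (Fin d → ℝ)} (hA : A.Nonempty)
    (h : (latCast ⁻¹' (((0 : ℕ) : ℝ) • A)).ncard =
      (latCast ⁻¹' interior ((((0 : ℕ) : ℝ) + 1) • A)).ncard) :
    ∃ p, latCast p ∈ interior A := by
  have h0 : latCast ⁻¹' (0 : Set (Fin d → ℝ)) = {0} := by
    ext x
    simp [funext_iff]
  rw [Nat.cast_zero, zero_add, one_smul, zero_smul_set hA, h0, ncard_singleton, eq_comm,
    ncard_eq_one] at h
  obtain ⟨p, hp⟩ := h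
  exact ⟨p, hp.symm.subset rfl⟩

end Lattice

section Polar

lemma mem_polarDual {S : Set (Fin d → ℝ)} {y : Fin d → ℝ} :
    y ∈ polarDual S ↔ ∀ s ∈ S, y ⬝ᵥ s ≤ 1 := Iff.rfl

lemma exists_dotProduct_eq (f : Module.Dual ℝ (Fin d → ℝ)) :
    ∃ w : Fin d → ℝ, ∀ z, w ⬝ᵥ z = f z :=
  ⟨(dotProductEquiv ℝ (Fin d)).symm f, fun z =>
    LinearMap.congr_fun ((dotProductEquiv ℝ (Fin d)).apply_symm_apply f) z⟩

lemma convex_setOf_dotProduct_le (y : Fin d → ℝ) (c : ℝ) : Convex ℝ {z | y ⬝ᵥ z ≤ c} :=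
  convex_halfSpace_le (dotProductEquiv ℝ (Fin d) y).isLinear c

lemma upperBounds_image_dotProduct_convexHull (x : Fin d → ℝ) (A : Set (Fin d → ℝ)) :
    upperBounds ((x ⬝ᵥ ·) '' convexHull ℝ A) = upperBounds ((x ⬝ᵥ ·) '' A) := by
  ext c
  simp only [mem_upperBounds, forall_mem_image]
  exact ⟨fun h y hy => h (subset_convexHull ℝ A hy),
    fun h y hy => convexHull_min h (convex_setOf_dotProduct_le x c) hy⟩

lemma polarDual_anti {A B : Set (Fin d → ℝ)} (h : A ⊆ B) : polarDual B ⊆ polarDual A :=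
  fun _ hy s hs => hy s (h hs)

lemma zero_mem_polarDual (S : Set (Fin d → ℝ)) : (0 : Fin d → ℝ) ∈ polarDual S :=
  mem_polarDual.2 fun _ _ => by simp

lemma polarDual_eq_iInter (S : Set (Fin d → ℝ)) :
    polarDual S = ⋂ s ∈ S, {y | s ⬝ᵥ y ≤ 1} := by
  ext; simp [mem_polarDual, dotProduct_comm]

lemma isClosed_polarDual (S : Set (Fin d → ℝ)) : IsClosed (polarDual S) := by
  rw [polarDual_eq_iInter]
  exact isClosed_biInter fun s _ => isClosed_le (by fun_prop) continuous_const

lemma convex_polarDual (S : Set (Fin d → ℝ)) : Convex ℝ (polarDual S) := by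
  rw [polarDual_eq_iInter]
  exact convex_iInter₂ fun s _ => convex_setOf_dotProduct_le s 1

lemma polarDual_convexHull (A : Set (Fin d → ℝ)) :
    polarDual (convexHull ℝ A) = polarDual A := by
  refine (polarDual_anti (subset_convexHull ℝ A)).antisymm fun y hy => mem_polarDual.2 ?_
  exact convexHull_min (mem_polarDual.1 hy) (convex_setOf_dotProduct_le y 1)

lemma isBounded_polarDual {Q : Set (Fin d → ℝ)} (hQ : Q ∈ 𝓝 0) : IsBounded (polarDual Q) := by
  obtain ⟨r, hr, hball⟩ := Metric.mem_nhds_iff.1 hQ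
  refine (Metric.isBounded_closedBall (x := 0) (r := 2 / r)).subset fun y hy => ?_
  rw [mem_closedBall_zero_iff, pi_norm_le_iff_of_nonneg (by positivity)]
  intro i
  have key : ∀ c : ℝ, |c| < r → y i * c ≤ 1 := fun c hc => by
    simpa [dotProduct_single] using
      mem_polarDual.1 hy (Pi.single i c) (hball (by simpa [Pi.norm_single] using hc))
  have h₁ := key (r / 2) (by rw [abs_of_pos (by positivity)]; linarith)
  have h₂ := key (-(r / 2)) (by rw [abs_neg, abs_of_pos (by positivity)]; linarith)
  rw [Real.norm_eq_abs, abs_le, le_div_iff₀ hr, ← neg_div, div_le_iff₀ hr]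
  constructor <;> linarith

lemma isCompact_polarDual {Q : Set (Fin d → ℝ)} (hQ : Q ∈ 𝓝 0) : IsCompact (polarDual Q) :=
  Metric.isCompact_of_isClosed_isBounded (isClosed_polarDual Q) (isBounded_polarDual hQ)

lemma polarDual_polarDual {Q : Set (Fin d → ℝ)} (hQc : IsClosed Q) (hQconv : Convex ℝ Q)
    (hQ0 : (0 : Fin d → ℝ) ∈ Q) : polarDual (polarDual Q) = Q := by
  refine Subset.antisymm (fun x hx => ?_) fun x hx => mem_polarDual.2 fun y hy => ?_
  · by_contra hxQ
    obtain ⟨f, u, hfQ, hfx⟩ := geometric_hahn_banach_closed_point hQconv hQc hxQ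
    obtain ⟨w, hw⟩ := exists_dotProduct_eq f.toLinearMap
    simp only [ContinuousLinearMap.coe_coe] at hw
    have hu : 0 < u := by simpa using hfQ 0 hQ0
    have hwQ : u⁻¹ • w ∈ polarDual Q := mem_polarDual.2 fun s hs => by
      rw [smul_dotProduct, hw, smul_eq_mul, inv_mul_le_one₀ hu]
      exact (hfQ s hs).le
    have hxw := mem_polarDual.1 hx _ hwQ
    rw [dotProduct_comm, smul_dotProduct, hw, smul_eq_mul, inv_mul_le_one₀ hu] at hxw
    exact hxw.not_gt hfx
  · rw [dotProduct_comm]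
    exact mem_polarDual.1 hy x hx

lemma mem_nhds_zero_of_isBounded_polarDual {Q : Set (Fin d → ℝ)} (hQconv : Convex ℝ Q)
    (hint : (interior Q).Nonempty) (hb : IsBounded (polarDual Q)) : Q ∈ 𝓝 0 := by
  rw [← mem_interior_iff_mem_nhds]
  by_contra h0
  obtain ⟨f, hf⟩ := geometric_hahn_banach_open_point hQconv.interior isOpen_interior h0
  obtain ⟨w, hw⟩ := exists_dotProduct_eq f.toLinearMap
  simp only [ContinuousLinearMap.coe_coe] at hw
  have hwQ : ∀ q ∈ Q, w ⬝ᵥ q ≤ 0 := by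
    have : closure (interior Q) ⊆ {z | w ⬝ᵥ z ≤ 0} :=
      closure_minimal (fun z hz => by simpa [hw] using (hf z hz).le)
        (isClosed_le (by fun_prop) continuous_const)
    rw [hQconv.closure_interior_eq_closure_of_nonempty_interior hint] at this
    exact fun q hq => this (subset_closure hq)
  have hw0 : w ≠ 0 := by
    obtain ⟨a, ha⟩ := hint
    rintro rfl
    have := hf a ha
    rw [← hw, ← hw] at this
    simp at this
  obtain ⟨C, hC⟩ := hb.exists_norm_le
  have hray : ((|C| + 1) / ‖w‖) • w ∈ polarDual Q := mem_polarDual.2 fun q hq => by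
    rw [smul_dotProduct, smul_eq_mul]
    exact (mul_nonpos_of_nonneg_of_nonpos (by positivity) (hwQ q hq)).trans zero_le_one
  have := hC _ hray
  rw [norm_smul, Real.norm_of_nonneg (by positivity),
    div_mul_cancel₀ _ (norm_ne_zero_iff.2 hw0)] at this
  linarith [le_abs_self C]

end Polar

lemma forall_ncard_le_eq_ncard_lt_iff {α : Type*} {g : α → ℝ} (hg : ∀ x, 0 ≤ g x)
    (hfin : ∀ c, {x | g x < c}.Finite) :
    (∀ n : ℕ, {x | g x ≤ n}.ncard = {x | g x < n + 1}.ncard) ↔ ∀ x, ∃ m : ℕ, g x = m := by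
  have hsub : ∀ n : ℕ, {x | g x ≤ n} ⊆ {x | g x < n + 1} := fun n x (hx : g x ≤ n) =>
    show g x < n + 1 by linarith
  refine ⟨fun h x => ⟨⌊g x⌋₊, le_antisymm ?_ (Nat.floor_le (hg x))⟩, fun h n => ?_⟩
  · exact (Set.ext_iff.1 (eq_of_subset_of_ncard_le (hsub _) (h _).ge (hfin _)) x).2
      (Nat.lt_floor_add_one (g x))
  · congr 1
    ext x
    obtain ⟨m, hm⟩ := h x
    simp only [mem_ofPred_eq, hm]
    norm_cast
    omega

section Gauge

variable {Q : Set (Fin d → ℝ)}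

lemma mem_smul_iff_gauge_le (hQc : IsClosed Q) (hQconv : Convex ℝ Q) (hQb : IsBounded Q)
    (hQ0 : Q ∈ 𝓝 0) {c : ℝ} (hc : 0 ≤ c) (x : Fin d → ℝ) : x ∈ c • Q ↔ gauge Q x ≤ c := by
  rcases hc.eq_or_lt with rfl | hc
  · rw [zero_smul_set (nonempty_of_mem (mem_of_mem_nhds hQ0)),
      (gauge_nonneg (s := Q) x).ge_iff_eq',
      gauge_eq_zero (absorbent_nhds_zero hQ0) ((NormedSpace.isVonNBounded_iff ℝ).2 hQb)]
    rfl
  · have := gauge_le_one_iff_mem_closure hQconv hQ0 (x := c⁻¹ • x)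
    rw [hQc.closure_eq, gauge_smul_of_nonneg (inv_nonneg.2 hc.le), smul_eq_mul,
      inv_mul_le_one₀ hc] at this
    rw [mem_smul_set_iff_inv_smul_mem₀ hc.ne', this]

lemma mem_interior_smul_iff_gauge_lt (hQconv : Convex ℝ Q) (hQ0 : Q ∈ 𝓝 0) {c : ℝ}
    (hc : 0 < c) (x : Fin d → ℝ) : x ∈ interior (c • Q) ↔ gauge Q x < c := by
  rw [interior_smul₀ hc.ne', mem_smul_set_iff_inv_smul_mem₀ hc.ne',
    ← gauge_lt_one_iff_mem_interior hQconv hQ0, gauge_smul_of_nonneg (inv_nonneg.2 hc.le),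
    smul_eq_mul, inv_mul_lt_one₀ hc]

lemma isLUB_gauge (hQc : IsClosed Q) (hQconv : Convex ℝ Q) (hQ0 : Q ∈ 𝓝 0) (x : Fin d → ℝ) :
    IsLUB ((x ⬝ᵥ ·) '' polarDual Q) (gauge Q x) := by
  refine ⟨?_, fun c hc => le_of_forall_gt_imp_ge_of_dense fun r hr => ?_⟩
  · rintro _ ⟨y, hy, rfl⟩
    refine le_of_forall_gt_imp_ge_of_dense fun r hr => ?_
    obtain ⟨b, hb, hbr, q, hq, rfl⟩ := exists_lt_of_gauge_lt (absorbent_nhds_zero hQ0) hr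
    show (b • q) ⬝ᵥ y ≤ r
    rw [smul_dotProduct, smul_eq_mul, dotProduct_comm]
    nlinarith [mem_polarDual.1 hy q hq]
  · have hr0 : 0 < r := (hc ⟨0, zero_mem_polarDual Q, dotProduct_zero x⟩).trans_lt hr
    refine gauge_le_of_mem hr0.le ?_
    rw [mem_smul_set_iff_inv_smul_mem₀ hr0.ne',
      ← polarDual_polarDual hQc hQconv (mem_of_mem_nhds hQ0)]
    refine mem_polarDual.2 fun y hy => ?_
    rw [smul_dotProduct, smul_eq_mul, inv_mul_le_one₀ hr0]
    exact (hc ⟨y, hy, rfl⟩).trans hr.le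

lemma forall_ncard_smul_eq_ncard_interior_iff (hQc : IsClosed Q) (hQconv : Convex ℝ Q)
    (hQb : IsBounded Q) (hQ0 : Q ∈ 𝓝 0) :
    (∀ n : ℕ, (latCast ⁻¹' ((n : ℝ) • Q)).ncard =
        (latCast ⁻¹' interior (((n : ℝ) + 1) • Q)).ncard) ↔
      ∀ x : Fin d → ℤ, ∃ m : ℕ, gauge Q (latCast x) = m := by
  have hle (n : ℕ) : latCast ⁻¹' ((n : ℝ) • Q) = {x | gauge Q (latCast x) ≤ n} :=
    ext fun x => mem_smul_iff_gauge_le hQc hQconv hQb hQ0 n.cast_nonneg _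
  have hlt (n : ℕ) :
      latCast ⁻¹' interior (((n : ℝ) + 1) • Q) = {x | gauge Q (latCast x) < n + 1} :=
    ext fun x => mem_interior_smul_iff_gauge_lt hQconv hQ0 n.cast_add_one_pos _
  simp_rw [hle, hlt]
  refine forall_ncard_le_eq_ncard_lt_iff (fun _ => gauge_nonneg _) fun c =>
    (finite_preimage_latCast (hQb.smul₀ |c|)).subset fun x (hx : gauge Q (latCast x) < c) => ?_
  exact (mem_smul_iff_gauge_le hQc hQconv hQb hQ0 (abs_nonneg c) _).2
    (hx.le.trans (le_abs_self c))

end Gauge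

section DualIntegral

lemma exists_int_isLUB_image_dotProduct_convexHull (W : Finset (Fin d → ℤ)) (hW : W.Nonempty)
    (x : Fin d → ℤ) : ∃ m : ℤ, IsLUB ((latCast x ⬝ᵥ ·) '' convexHull ℝ (latCast '' ↑W)) m := by
  obtain ⟨w, hw, hmax⟩ := W.exists_max_image (x ⬝ᵥ ·) hW
  refine ⟨x ⬝ᵥ w, ?_⟩
  rw [IsLUB, upperBounds_image_dotProduct_convexHull, image_image, ← latCast_dotProduct]
  refine IsGreatest.isLUB ⟨mem_image_of_mem _ hw, ?_⟩
  rintro _ ⟨y, hy, rfl⟩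
  simpa only [latCast_dotProduct, Int.cast_le] using hmax y hy

lemma span_setOf_dotProduct_eq_one_eq_top {S : Set (Fin d → ℝ)} (hSfin : S.Finite)
    {v : Fin d → ℝ} (hv : v ∈ extremePoints ℝ (polarDual S)) :
    Submodule.span ℝ {s ∈ S | v ⬝ᵥ s = 1} = ⊤ := by
  by_contra hne
  obtain ⟨f, hf0, hfT⟩ := Submodule.exists_le_ker_of_lt_top _ (lt_top_iff_ne_top.2 hne)
  obtain ⟨w, hw⟩ := exists_dotProduct_eq f
  have hw0 : w ≠ 0 := by
    rintro rfl
    exact hf0 (LinearMap.ext fun z => by simp [← hw])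
  have hline : ∀ᶠ t in 𝓝 (0 : ℝ), v + t • w ∈ polarDual S := by
    simp only [mem_polarDual]
    refine (eventually_all_finite hSfin).2 fun s hs => ?_
    simp only [add_dotProduct, smul_dotProduct, smul_eq_mul]
    by_cases h1 : v ⬝ᵥ s = 1
    · have hws : w ⬝ᵥ s = 0 := (hw s).trans (hfT (Submodule.subset_span ⟨hs, h1⟩))
      exact Eventually.of_forall fun t => by simp [h1, hws]
    · have hlt := lt_of_le_of_ne (mem_polarDual.1 hv.1 s hs) h1
      have hcont : Continuous fun t : ℝ => v ⬝ᵥ s + t * (w ⬝ᵥ s) := by fun_prop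
      exact ((hcont.tendsto' 0 _ (by simp)).eventually (gt_mem_nhds hlt)).mono fun _ => le_of_lt
  have hline' : ∀ᶠ t in 𝓝 (0 : ℝ), v + (-t) • w ∈ polarDual S :=
    (continuous_neg.tendsto' (0 : ℝ) 0 neg_zero).eventually hline
  obtain ⟨t, ⟨h₁, h₂⟩, ht⟩ :=
    (((hline.and hline').filter_mono nhdsWithin_le_nhds).and self_mem_nhdsWithin).exists
      (f := 𝓝[≠] (0 : ℝ))
  have hseg : v ∈ openSegment ℝ (v + t • w) (v + (-t) • w) :=
    ⟨1 / 2, 1 / 2, by norm_num, by norm_num, by norm_num, by module⟩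
  have := ((mem_extremePoints.1 hv).2 _ h₁ _ h₂ hseg).1
  rw [add_eq_left, smul_eq_zero] at this
  exact this.elim ht hw0

lemma isGreatest_sum_smul_dotProduct {S : Set (Fin d → ℝ)} {T : Finset (Fin d → ℝ)}
    (hTS : ↑T ⊆ S) {v : Fin d → ℝ} (hv : v ∈ polarDual S) (hvT : ∀ s ∈ T, v ⬝ᵥ s = 1)
    {c : (Fin d → ℝ) → ℝ} (hc : ∀ s ∈ T, 0 ≤ c s) :
    IsGreatest (((∑ s ∈ T, c s • s) ⬝ᵥ ·) '' polarDual S) ((∑ s ∈ T, c s • s) ⬝ᵥ v) := by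
  refine ⟨mem_image_of_mem _ hv, ?_⟩
  rintro _ ⟨y, hy, rfl⟩
  simp only [sum_dotProduct, smul_dotProduct, smul_eq_mul]
  refine Finset.sum_le_sum fun s hs => mul_le_mul_of_nonneg_left ?_ (hc s hs)
  rw [dotProduct_comm s v, hvT s hs, dotProduct_comm]
  exact mem_polarDual.1 hy s (hTS hs)

lemma exists_int_eq_apply_of_span_eq_top {S : Set (Fin d → ℝ)} {T : Finset (Fin d → ℝ)}
    (hTS : ↑T ⊆ S) {v : Fin d → ℝ} (hv : v ∈ polarDual S) (hvT : ∀ s ∈ T, v ⬝ᵥ s = 1)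
    (hspan : Submodule.span ℝ (T : Set (Fin d → ℝ)) = ⊤) {N : ℕ} (hN : 0 < N)
    {u : Fin d → ℤ} (hu : latCast u = N • ∑ s ∈ T, s)
    (hS : ∀ x : Fin d → ℤ, ∃ m : ℤ, IsLUB ((latCast x ⬝ᵥ ·) '' polarDual S) m) (j : Fin d) :
    ∃ m : ℤ, v j = m := by
  have hcone : ∀ (z : Fin d → ℤ) (c : (Fin d → ℝ) → ℝ), (∀ s ∈ T, 0 ≤ c s) →
      latCast z = ∑ s ∈ T, c s • s → ∃ m : ℤ, latCast z ⬝ᵥ v = m := by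
    intro z c hc hz
    obtain ⟨m, hm⟩ := hS z
    refine ⟨m, ?_⟩
    rw [hz] at hm ⊢
    exact (isGreatest_sum_smul_dotProduct hTS hv hvT hc).isLUB.unique hm
  have hj : Pi.single j (1 : ℝ) ∈ Submodule.span ℝ (T : Set (Fin d → ℝ)) := by
    rw [hspan]
    exact Submodule.mem_top
  obtain ⟨c, -, hc⟩ := Submodule.mem_span_finset.1 hj
  -- `k • u` and `k • u + e_j` both lie in the cone spanned by `T` once `k` is large
  set k : ℕ := ⌈∑ s ∈ T, |c s|⌉₊
  have hk : ∀ s ∈ T, |c s| ≤ k * N := fun s hs =>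
    calc |c s| ≤ ∑ s ∈ T, |c s| :=
          Finset.single_le_sum (f := fun s => |c s|) (fun _ _ => abs_nonneg _) hs
      _ ≤ k := Nat.le_ceil _
      _ ≤ k * N := le_mul_of_one_le_right k.cast_nonneg (by exact_mod_cast hN)
  have hku : latCast (k • u) = ∑ s ∈ T, ((k * N : ℕ) : ℝ) • s := by
    rw [latCast_nsmul, hu, Finset.smul_sum, Finset.smul_sum]
    exact Finset.sum_congr rfl fun s _ => by rw [smul_smul, Nat.cast_smul_eq_nsmul]
  obtain ⟨m₁, hm₁⟩ := hcone (k • u) _ (fun _ _ => by positivity) hku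
  obtain ⟨m₂, hm₂⟩ := hcone (k • u + Pi.single j 1) (fun s => k * N + c s)
    (fun s hs => by linarith [neg_abs_le (c s), hk s hs])
    (by simp only [latCast_add, hku, latCast_single, ← hc, add_smul, Finset.sum_add_distrib,
          Nat.cast_mul])
  refine ⟨m₂ - m₁, ?_⟩
  rw [Int.cast_sub, ← hm₁, ← hm₂, latCast_add, add_dotProduct, latCast_single,
    single_dotProduct, one_mul, add_sub_cancel_left]

lemma extremePoints_polarDual_subset_range_latCast {S : Set (Fin d → ℝ)} (hSfin : S.Finite)
    (hSrat : ∀ s ∈ S, ∀ i, ∃ q : ℚ, s i = q)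
    (hS : ∀ x : Fin d → ℤ, ∃ m : ℤ, IsLUB ((latCast x ⬝ᵥ ·) '' polarDual S) m) :
    extremePoints ℝ (polarDual S) ⊆ range latCast := by
  classical
  intro v hv
  set T := hSfin.toFinset.filter (v ⬝ᵥ · = 1)
  have hTS : ↑T ⊆ S := fun s hs => hSfin.mem_toFinset.1 (Finset.mem_filter.1 hs).1
  have hspan : Submodule.span ℝ (T : Set (Fin d → ℝ)) = ⊤ := by
    rw [← span_setOf_dotProduct_eq_one_eq_top hSfin hv]
    congr 1
    ext
    simp [T]
  have hrat : ∀ i, ∃ q : ℚ, (∑ s ∈ T, s) i = q := fun i => by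
    obtain ⟨q, hq⟩ : ∑ s ∈ T, s i ∈ (Rat.castHom ℝ).range := Subring.sum_mem _ fun s hs => by
      obtain ⟨q, hq⟩ := hSrat s (hTS hs) i
      exact ⟨q, by simp [hq]⟩
    exact ⟨q, by simpa [Finset.sum_apply] using hq.symm⟩
  obtain ⟨N, hN, u, hu⟩ := exists_pos_latCast_eq_nsmul hrat
  choose z hz using exists_int_eq_apply_of_span_eq_top hTS hv.1
    (fun s hs => (Finset.mem_filter.1 hs).2) hspan hN hu hS
  exact ⟨z, funext fun j => (hz j).symm⟩

lemma exists_finset_eq_convexHull_of_extremePoints_subset {K : Set (Fin d → ℝ)}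
    (hKc : IsCompact K) (hKconv : Convex ℝ K) (hext : extremePoints ℝ K ⊆ range latCast) :
    ∃ W : Finset (Fin d → ℤ), K = convexHull ℝ (latCast '' ↑W) := by
  have hfin := finite_preimage_latCast hKc.isBounded
  refine ⟨hfin.toFinset, Subset.antisymm ?_ ?_⟩
  · rw [Finite.coe_toFinset, image_preimage_eq_inter_range]
    calc K = closure (convexHull ℝ (extremePoints ℝ K)) :=
          (closure_convexHull_extremePoints hKc hKconv).symm
      _ ⊆ closure (convexHull ℝ (K ∩ range latCast)) :=
          closure_mono (convexHull_mono fun v hv => ⟨hv.1, hext hv⟩)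
      _ = convexHull ℝ (K ∩ range latCast) := by
          rw [← image_preimage_eq_inter_range]
          exact (hfin.image _).isCompact_convexHull (𝕜 := ℝ) |>.isClosed.closure_eq
  · rw [Finite.coe_toFinset]
    exact convexHull_min (image_preimage_subset _ _) hKconv

lemma exists_polarDual_eq_convexHull_iff_gauge {S : Set (Fin d → ℝ)} (hSfin : S.Finite)
    (hSrat : ∀ s ∈ S, ∀ i, ∃ q : ℚ, s i = q) (hS0 : convexHull ℝ S ∈ 𝓝 0) :
    (∃ W : Finset (Fin d → ℤ), polarDual (convexHull ℝ S) = convexHull ℝ (latCast '' ↑W)) ↔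
      ∀ x : Fin d → ℤ, ∃ m : ℕ, gauge (convexHull ℝ S) (latCast x) = m := by
  have hSc := (hSfin.isCompact_convexHull (𝕜 := ℝ)).isClosed
  have hgauge := isLUB_gauge hSc (convex_convexHull ℝ S) hS0
  constructor
  · rintro ⟨W, hW⟩ x
    have hWne : W.Nonempty := by
      have h0 : (0 : Fin d → ℝ) ∈ convexHull ℝ (latCast '' ↑W) := hW ▸ zero_mem_polarDual _
      simpa using convexHull_nonempty_iff.1 ⟨0, h0⟩
    obtain ⟨m, hm⟩ := exists_int_isLUB_image_dotProduct_convexHull W hWne x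
    have hg := (hgauge (latCast x)).unique (hW ▸ hm)
    have hm0 : 0 ≤ m := by exact_mod_cast hg ▸ gauge_nonneg _
    exact ⟨m.toNat, by rw [hg]; exact_mod_cast (Int.toNat_of_nonneg hm0).symm⟩
  · intro h
    refine exists_finset_eq_convexHull_of_extremePoints_subset (isCompact_polarDual hS0)
      (convex_polarDual _) ?_
    rw [polarDual_convexHull]
    refine extremePoints_polarDual_subset_range_latCast hSfin hSrat fun x => ?_
    obtain ⟨m, hm⟩ := h x
    refine ⟨m, ?_⟩
    rw [← polarDual_convexHull, Int.cast_natCast, ← hm]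
    exact hgauge _

lemma exists_polarDual_image_sub_eq_convexHull_iff {P S : Set (Fin d → ℝ)} (hP : P = convexHull ℝ S)
    (hSfin : S.Finite) (hSrat : ∀ s ∈ S, ∀ i, ∃ q : ℚ, s i = q) {p : Fin d → ℤ}
    (hp : (· - latCast p) '' P ∈ 𝓝 0) :
    (∃ W : Finset (Fin d → ℤ),
        polarDual ((· - latCast p) '' P) = convexHull ℝ (latCast '' ↑W)) ↔
      ∀ n : ℕ, (latCast ⁻¹' ((n : ℝ) • P)).ncard =
        (latCast ⁻¹' interior (((n : ℝ) + 1) • P)).ncard := by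
  have hQS : (· - latCast p) '' P = convexHull ℝ ((· - latCast p) '' S) := by
    rw [hP, image_sub_convexHull]
  have hQc : IsCompact ((· - latCast p) '' P) :=
    hQS ▸ (hSfin.image _).isCompact_convexHull (𝕜 := ℝ)
  rw [← forall_ncard_smul_eq_ncard_interior_image_sub_iff,
    forall_ncard_smul_eq_ncard_interior_iff hQc.isClosed (hQS ▸ convex_convexHull ℝ _)
      hQc.isBounded hp, hQS]
  rw [hQS] at hp
  refine exists_polarDual_eq_convexHull_iff_gauge (hSfin.image _) ?_ hp
  rintro _ ⟨s, hs, rfl⟩ i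
  obtain ⟨q, hq⟩ := hSrat s hs i
  exact ⟨q - p i, by simp [hq]⟩

end DualIntegral

/-- (Hibi) A full-dimensional rational convex polytope `P ⊆ ℝ^d` is dual-integral
(there is a lattice point `p` such that `(P - p)*` is a lattice polytope) if and only
if `#(nP ∩ ℤ^d) = #(int((n+1)P) ∩ ℤ^d)` for all natural numbers `n`. -/
theorem hibi_dualIntegral_iff {d : ℕ}
    (P : Set (Fin d → ℝ)) (S : Set (Fin d → ℝ)) (hSfin : S.Finite)
    (hSrat : ∀ x ∈ S, ∀ i, ∃ q : ℚ, x i = q)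
    (hP : P = convexHull ℝ S)
    (hfull : (interior P).Nonempty) :
    (∃ (p : Fin d → ℤ) (W : Finset (Fin d → ℤ)),
        polarDual ((fun x => x - latCast p) '' P) = convexHull ℝ (latCast '' ↑W)) ↔
      ∀ n : ℕ, Set.ncard {x : Fin d → ℤ | latCast x ∈ (n : ℝ) • P} =
        Set.ncard {x : Fin d → ℤ | latCast x ∈ interior (((n : ℝ) + 1) • P)} := by
  constructor
  · rintro ⟨p, W, hW⟩
    have hQconv : Convex ℝ ((· - latCast p) '' P) := by
      rw [hP, image_sub_convexHull]
      exact convex_convexHull ℝ _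
    have hQ0 := mem_nhds_zero_of_isBounded_polarDual hQconv
      (by rw [interior_image_sub]; exact hfull.image _)
      (hW ▸ ((W.finite_toSet.image _).isCompact_convexHull (𝕜 := ℝ)).isBounded)
    exact (exists_polarDual_image_sub_eq_convexHull_iff hP hSfin hSrat hQ0).1 ⟨W, hW⟩
  · intro h
    obtain ⟨p, hp⟩ := exists_latCast_mem_interior_of_ncard_eq (hfull.mono interior_subset) (h 0)
    have hQ0 : (· - latCast p) '' P ∈ 𝓝 0 := by
      simpa using (Homeomorph.subRight (latCast p)).isOpenMap.image_mem_nhds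
        (mem_interior_iff_mem_nhds.1 hp)
    exact ⟨p, (exists_polarDual_image_sub_eq_convexHull_iff hP hSfin hSrat hQ0).2 h⟩
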